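/- The unitary U_n satisfies (⟨0|⊗⟨0|⊗⟨0|⊗I_N) U_n (|0⟩⊗|0⟩⊗|0⟩⊗e_0) = (1/4)(−e_0 + e_1). -/

import Mathlib

open Matrix
open scoped Kronecker

noncomputable section

instance instNeZeroPow2 (n : ℕ) : NeZero (2 ^ n) := ⟨pow_ne_zero n two_ne_zero⟩

/-- Cyclic left shift: `Sm • e_j = e_{j-1 mod N}`, i.e. `(Sm)_{i j} = [i = j - 1]`. -/
def Sm (N : ℕ) [NeZero N] : Matrix (Fin N) (Fin N) ℂ :=
  Matrix.of fun i j => if i = j - 1 then 1 else 0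

/-- Cyclic right shift: `Sp • e_j = e_{j+1 mod N}`. -/
def Sp (N : ℕ) [NeZero N] : Matrix (Fin N) (Fin N) ℂ :=
  Matrix.of fun i j => if i = j + 1 then 1 else 0

/-- The index `N - 1` of the last grid point. -/
def fLast (N : ℕ) [NeZero N] : Fin N := ⟨N - 1, Nat.sub_lt (Nat.pos_of_neZero N) Nat.one_pos⟩

def Hgate : Matrix (Fin 2) (Fin 2) ℂ := ((1 / Real.sqrt 2 : ℝ) : ℂ) • !![1, 1; 1, -1]
def Zgate : Matrix (Fin 2) (Fin 2) ℂ := !![1, 0; 0, -1]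
def Xgate : Matrix (Fin 2) (Fin 2) ℂ := !![0, 1; 1, 0]
def P0 : Matrix (Fin 2) (Fin 2) ℂ := !![1, 0; 0, 0]
def P1 : Matrix (Fin 2) (Fin 2) ℂ := !![0, 0; 0, 1]

/-- Controlled flip `F(Q) = X ⊗ Q + I₂ ⊗ (I − Q)` for a projector `Q`. -/
def Fctrl {α : Type*} [DecidableEq α] [Fintype α] (Q : Matrix α α ℂ) :
    Matrix (Fin 2 × α) (Fin 2 × α) ℂ :=
  Xgate ⊗ₖ Q + (1 : Matrix (Fin 2) (Fin 2) ℂ) ⊗ₖ ((1 : Matrix α α ℂ) - Q)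

/-- `C₋ = I₂ ⊗ (|0⟩⟨0| ⊗ I₂ ⊗ S⁻ + |1⟩⟨1| ⊗ I₂ ⊗ I_N)` on `del, ℓ₁, ℓ₀, j`. -/
def Cminus3 (N : ℕ) [NeZero N] :
    Matrix (Fin 2 × Fin 2 × Fin 2 × Fin N) (Fin 2 × Fin 2 × Fin 2 × Fin N) ℂ :=
  (1 : Matrix (Fin 2) (Fin 2) ℂ) ⊗ₖ
    (P0 ⊗ₖ ((1 : Matrix (Fin 2) (Fin 2) ℂ) ⊗ₖ Sm N) +
     P1 ⊗ₖ ((1 : Matrix (Fin 2) (Fin 2) ℂ) ⊗ₖ (1 : Matrix (Fin N) (Fin N) ℂ)))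

/-- `C₊ = I₂ ⊗ I₂ ⊗ (|1⟩⟨1| ⊗ S⁺ + |0⟩⟨0| ⊗ I_N)` on `del, ℓ₁, ℓ₀, j`. -/
def Cplus3 (N : ℕ) [NeZero N] :
    Matrix (Fin 2 × Fin 2 × Fin 2 × Fin N) (Fin 2 × Fin 2 × Fin 2 × Fin N) ℂ :=
  (1 : Matrix (Fin 2) (Fin 2) ℂ) ⊗ₖ ((1 : Matrix (Fin 2) (Fin 2) ℂ) ⊗ₖ
    (P1 ⊗ₖ Sp N + P0 ⊗ₖ (1 : Matrix (Fin N) (Fin N) ℂ)))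

/-- `B₀ = F(|0⟩⟨0| ⊗ |0⟩⟨0| ⊗ e₀e₀ᵀ)`. -/
def B00 (N : ℕ) [NeZero N] :
    Matrix (Fin 2 × Fin 2 × Fin 2 × Fin N) (Fin 2 × Fin 2 × Fin 2 × Fin N) ℂ :=
  Fctrl (P0 ⊗ₖ (P0 ⊗ₖ Matrix.single (0 : Fin N) (0 : Fin N) (1 : ℂ)))

/-- `B₂ = F(|0⟩⟨0| ⊗ |1⟩⟨1| ⊗ e₀e₀ᵀ)`. -/
def B01 (N : ℕ) [NeZero N] :
    Matrix (Fin 2 × Fin 2 × Fin 2 × Fin N) (Fin 2 × Fin 2 × Fin 2 × Fin N) ℂ :=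
  Fctrl (P0 ⊗ₖ (P1 ⊗ₖ Matrix.single (0 : Fin N) (0 : Fin N) (1 : ℂ)))

/-- `B_{N−1} = F(|1⟩⟨1| ⊗ |1⟩⟨1| ⊗ e_{N−1}e_{N−1}ᵀ)`. -/
def B11L (N : ℕ) [NeZero N] :
    Matrix (Fin 2 × Fin 2 × Fin 2 × Fin N) (Fin 2 × Fin 2 × Fin 2 × Fin N) ℂ :=
  Fctrl (P1 ⊗ₖ (P1 ⊗ₖ Matrix.single (fLast N) (fLast N) (1 : ℂ)))

/-- `B₄ = F(|0⟩⟨0| ⊗ |1⟩⟨1| ⊗ e_{N−1}e_{N−1}ᵀ)`. -/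
def B01L (N : ℕ) [NeZero N] :
    Matrix (Fin 2 × Fin 2 × Fin 2 × Fin N) (Fin 2 × Fin 2 × Fin 2 × Fin N) ℂ :=
  Fctrl (P0 ⊗ₖ (P1 ⊗ₖ Matrix.single (fLast N) (fLast N) (1 : ℂ)))

/-- `I₂ ⊗ A ⊗ A ⊗ I_N` for a single-qubit gate `A`. -/
def sandwich (N : ℕ) [NeZero N] (A : Matrix (Fin 2) (Fin 2) ℂ) :
    Matrix (Fin 2 × Fin 2 × Fin 2 × Fin N) (Fin 2 × Fin 2 × Fin 2 × Fin N) ℂ :=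
  (1 : Matrix (Fin 2) (Fin 2) ℂ) ⊗ₖ (A ⊗ₖ (A ⊗ₖ (1 : Matrix (Fin N) (Fin N) ℂ)))

/-- `U_d = (I₂⊗H⊗H⊗I) · C₊ · C₋ · B_{N−1} · B₀ · (I₂⊗Z⊗Z⊗I) · (I₂⊗H⊗H⊗I)`. -/
def Ud (N : ℕ) [NeZero N] :
    Matrix (Fin 2 × Fin 2 × Fin 2 × Fin N) (Fin 2 × Fin 2 × Fin 2 × Fin N) ℂ :=
  sandwich N Hgate * Cplus3 N * Cminus3 N * B11L N * B00 N * sandwich N Zgate * sandwich N Hgate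

/-- `U_n = (I₂⊗H⊗H⊗I) · C₊ · C₋ · B₄ · B₃ · B₂ · B₁ · (I₂⊗Z⊗Z⊗I) · (I₂⊗H⊗H⊗I)`. -/
def Un (N : ℕ) [NeZero N] :
    Matrix (Fin 2 × Fin 2 × Fin 2 × Fin N) (Fin 2 × Fin 2 × Fin 2 × Fin N) ℂ :=
  sandwich N Hgate * Cplus3 N * Cminus3 N * B01L N * B11L N * B01 N * B00 N *
    sandwich N Zgate * sandwich N Hgate

/-- The standard basis vector `e_i` of `ℂ^N`. -/
def eVec (N : ℕ) (i : Fin N) : Fin N → ℂ := Pi.single i 1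

/-!
Every gate between the two Hadamard layers maps computational basis states to basis states
(up to sign), so the circuit can be traced on the four components of
`(H ⊗ H)|00⟩ = ½ (|00⟩ + |01⟩ + |10⟩ + |11⟩)` of the `ℓ₁ ℓ₀` register, all with `del = 0` and
system state `e₀`. `Z ⊗ Z` gives them the signs `+, -, -, +`; the flags `B₁, B₂` set `del = 1` on
the two components with `ℓ₁ = 0`, while `B₃, B₄` never fire because `0 ≠ N - 1`. The shifts only
move the flagged components and the `|11⟩` component, which goes to `e₁`. The final `⟨00|(H ⊗ H)`
weighs each component with `del = 0` by `½`, leaving `¼ (-e₀ + e₁)`.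
-/

lemma P0_eq_single : P0 = single 0 0 1 := by
  ext i j; fin_cases i <;> fin_cases j <;> rfl

lemma P1_eq_single : P1 = single 1 1 1 := by
  ext i j; fin_cases i <;> fin_cases j <;> rfl

lemma Hgate_apply_zero (i : Fin 2) : Hgate i 0 = ((1 / Real.sqrt 2 : ℝ) : ℂ) := by
  fin_cases i <;> simp [Hgate]

lemma Hgate_zero_apply (j : Fin 2) : Hgate 0 j = ((1 / Real.sqrt 2 : ℝ) : ℂ) := by
  fin_cases j <;> simp [Hgate]

lemma inv_sqrt_two_mul_self :
    ((1 / Real.sqrt 2 : ℝ) : ℂ) * ((1 / Real.sqrt 2 : ℝ) : ℂ) = 1 / 2 := by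
  rw [← Complex.ofReal_mul, div_mul_div_comm, Real.mul_self_sqrt zero_le_two]
  norm_num

lemma Fctrl_single_mulVec_single {α : Type*} [DecidableEq α] [Fintype α] (x y : α) (d : Fin 2)
    (k : ℂ) :
    Fctrl (single x x 1) *ᵥ Pi.single (d, y) k = Pi.single (if y = x then d.rev else d, y) k := by
  ext ⟨e, z⟩
  fin_cases d <;> fin_cases e <;> simp [Fctrl, Xgate, single_apply, one_apply] <;> grind

section Circuit

variable {N : ℕ}

abbrev ket (d l₁ l₀ : Fin 2) (t : Fin N) : Fin 2 × Fin 2 × Fin 2 × Fin N → ℂ :=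
  Pi.single (d, l₁, l₀, t) 1

lemma Fctrl_kronecker_single_mulVec_ket (p q : Fin 2) (s : Fin N) (d l₁ l₀ : Fin 2) (t : Fin N) :
    Fctrl (single p p 1 ⊗ₖ (single q q 1 ⊗ₖ single s s 1)) *ᵥ ket d l₁ l₀ t =
      ket (if (l₁, l₀, t) = (p, q, s) then d.rev else d) l₁ l₀ t := by
  simp only [single_kronecker_single, mul_one, Fctrl_single_mulVec_single]

variable [NeZero N]

lemma fLast_eq_neg_one : fLast N = -1 := by
  rw [eq_neg_iff_add_eq_zero]
  ext
  simp [fLast, Fin.val_add, Nat.sub_add_cancel (Nat.pos_of_neZero N)]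

lemma fLast_ne_zero (hN : 2 ≤ N) : fLast N ≠ 0 := by
  rw [Ne, Fin.ext_iff]
  simp [fLast]
  omega

lemma sandwich_mulVec_apply (A : Matrix (Fin 2) (Fin 2) ℂ) (v : Fin 2 × Fin 2 × Fin 2 × Fin N → ℂ)
    (d l₁ l₀ : Fin 2) (t : Fin N) :
    (sandwich N A *ᵥ v) (d, l₁, l₀, t) =
      ∑ a, ∑ b, A l₁ a * A l₀ b * v (d, a, b, t) := by
  simp [mulVec, dotProduct, sandwich, Fintype.sum_prod_type, one_apply, mul_assoc]

lemma sandwich_mulVec_ket (A : Matrix (Fin 2) (Fin 2) ℂ) (d l₁ l₀ : Fin 2) (t : Fin N) :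
    sandwich N A *ᵥ ket d l₁ l₀ t = ∑ a, ∑ b, (A a l₁ * A b l₀) • ket d a b t := by
  ext ⟨d', a, b, t'⟩
  fin_cases a <;> fin_cases b <;>
    simp [sandwich, one_apply, Finset.sum_apply, Pi.single_apply] <;> grind

lemma Cminus3_mulVec_ket (d l₁ l₀ : Fin 2) (t : Fin N) :
    Cminus3 N *ᵥ ket d l₁ l₀ t = ket d l₁ l₀ (if l₁ = 0 then t - 1 else t) := by
  ext ⟨d', a, b, t'⟩
  fin_cases l₁ <;> fin_cases a <;>
    simp [Cminus3, Sm, P0_eq_single, P1_eq_single, one_apply, Pi.single_apply] <;> grind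

lemma Cplus3_mulVec_ket (d l₁ l₀ : Fin 2) (t : Fin N) :
    Cplus3 N *ᵥ ket d l₁ l₀ t = ket d l₁ l₀ (if l₀ = 1 then t + 1 else t) := by
  ext ⟨d', a, b, t'⟩
  fin_cases l₀ <;> fin_cases b <;>
    simp [Cplus3, Sp, P0_eq_single, P1_eq_single, one_apply, Pi.single_apply] <;> grind

theorem Un_mulVec_ket_zero (hN : 2 ≤ N) :
    Un N *ᵥ ket 0 0 0 0 = sandwich N Hgate *ᵥ
      ((1 / 2 : ℂ) • (ket 1 0 0 (fLast N) - ket 1 0 1 0 - ket 0 1 0 0 + ket 0 1 1 1)) := by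
  have prepared : sandwich N Zgate *ᵥ (sandwich N Hgate *ᵥ ket 0 0 0 0) =
      (1 / 2 : ℂ) • (ket 0 0 0 0 - ket 0 0 1 0 - ket 0 1 0 0 + ket 0 1 1 0) := by
    simp only [sandwich_mulVec_ket, Fin.sum_univ_two, mulVec_add, mulVec_smul,
      Hgate_apply_zero, inv_sqrt_two_mul_self]
    simp only [Zgate, of_apply, cons_val', cons_val_zero, cons_val_one, cons_val_fin_one]
    module
  have flagged : B01L N *ᵥ (B11L N *ᵥ (B01 N *ᵥ (B00 N *ᵥ
      (ket 0 0 0 0 - ket 0 0 1 0 - ket 0 1 0 0 + ket 0 1 1 0)))) =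
      ket 1 0 0 0 - ket 1 0 1 0 - ket 0 1 0 0 + ket 0 1 1 0 := by
    simp only [B00, B01, B11L, B01L, P0_eq_single, P1_eq_single, mulVec_add, mulVec_sub,
      Fctrl_kronecker_single_mulVec_ket]
    simp [(fLast_ne_zero hN).symm]
  have shifted : Cplus3 N *ᵥ (Cminus3 N *ᵥ
      (ket 1 0 0 0 - ket 1 0 1 0 - ket 0 1 0 0 + ket 0 1 1 0)) =
      ket 1 0 0 (fLast N) - ket 1 0 1 0 - ket 0 1 0 0 + ket 0 1 1 1 := by
    simp only [mulVec_add, mulVec_sub, Cminus3_mulVec_ket, Cplus3_mulVec_ket]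
    simp [fLast_eq_neg_one]
  simp only [Un, ← mulVec_mulVec, prepared, mulVec_smul, flagged, shifted]

end Circuit

/-- `(⟨0|⊗⟨0|⊗⟨0|⊗I) U_n (|0⟩⊗|0⟩⊗|0⟩⊗e_0) = (1/4)(−e_0 + e_1)`. -/
theorem un_left_boundary_action (n : ℕ) (hn : 1 ≤ n) :
    (fun i : Fin (2 ^ n) =>
        Un (2 ^ n) ((0 : Fin 2), (0 : Fin 2), (0 : Fin 2), i)
          ((0 : Fin 2), (0 : Fin 2), (0 : Fin 2), (0 : Fin (2 ^ n))))
      = (1 / 4 : ℂ) •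
          (-eVec (2 ^ n) 0
            + eVec (2 ^ n)
                ⟨1, (by have := Nat.one_lt_two_pow_iff.mpr (by omega : n ≠ 0); omega)⟩) := by
  have hN : 2 ≤ 2 ^ n := Nat.le_self_pow (by omega) 2
  have one_eq : (1 : Fin (2 ^ n)) = ⟨1, hN⟩ := Fin.ext (Nat.mod_eq_of_lt hN)
  funext i
  have entry : Un (2 ^ n) (0, 0, 0, i) (0, 0, 0, 0) = (Un (2 ^ n) *ᵥ ket 0 0 0 0) (0, 0, 0, i) := by
    simp
  rw [entry, Un_mulVec_ket_zero hN, sandwich_mulVec_apply]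
  simp only [Hgate_zero_apply, inv_sqrt_two_mul_self]
  norm_num [eVec, Pi.single_apply, ← one_eq, mul_add, mul_ite]
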